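/- arXiv:2101.12468 — 3 statements merged into one kernel-verified Lean document; each statement's English description precedes it below -/
import Mathlib

section
/- The number of partial automorphisms of the path P_n with a prescribed nonempty domain D ⊆ {1,…,n} equals 2^T · r! · C(n−s+1, r), where r is the number of maximal intervals of D, s = |D|, and T is the number of maximal intervals of D of size at least 2. -/
/-!
The domain `D` splits into maximal runs of lengths `ℓ₁, …, ℓᵣ` with `∑ ℓᵢ = s`. A partial
automorphism with domain `D` is injective and sends consecutive points to consecutive points,
so on each run it is a progression of step `+1` or `-1`: it maps each run onto an interval of
the same length. Since it also reflects adjacency, the images of different runs are separated by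
a free cell, and conversely any such choice gives a partial automorphism. So the map amounts to
an orientation of every run (a genuine choice exactly for the `T` runs of length `≥ 2`) and a
placement of `r` blocks of lengths `ℓᵢ` in `{1, …, n}` with a free cell between any two.
Deleting, for every block, the cells of the blocks to its left maps the placements bijectively
onto the injective labellings of the runs by `{1, …, n - s + 1}`, of which there are
`r! · C(n - s + 1, r)`.
-/

open scoped Classical

/-- `adj u v` means `|u - v| = 1`, i.e. `u` and `v` are adjacent in the path. -/
def adj (u v : ℕ) : Prop := u + 1 = v ∨ v + 1 = u

/-- `f` is an injective partial endomorphism of the path `P_n` on `{1,…,n}`. -/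
structure IsIEnd (n : ℕ) (f : ℕ →. ℕ) : Prop where
  dom_subset : f.Dom ⊆ Set.Icc 1 n
  ran_subset : f.ran ⊆ Set.Icc 1 n
  inj : ∀ ⦃x y a : ℕ⦄, a ∈ f x → a ∈ f y → x = y
  edge : ∀ ⦃u v a b : ℕ⦄, a ∈ f u → b ∈ f v → adj u v → adj a b

/-- `f` is a partial automorphism of the path `P_n`. -/
def IsPAut (n : ℕ) (f : ℕ →. ℕ) : Prop :=
  IsIEnd n f ∧ ∀ ⦃u v a b : ℕ⦄, a ∈ f u → b ∈ f v → adj a b → adj u v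

/-- Left-to-right composition of partial maps: `x (pcomp f g) = (x f) g`. -/
def pcomp (f g : ℕ →. ℕ) : ℕ →. ℕ := PFun.comp g f

/-- The inverse of an injective partial map. -/
noncomputable def pinv (f : ℕ →. ℕ) : ℕ →. ℕ :=
  fun y => ⟨∃ x, y ∈ f x, fun h => h.choose⟩

/-- `I` is an interval of `X`: a set of consecutive integers contained in `X`. -/
def IsIntervalOf (I X : Set ℕ) : Prop :=
  I ⊆ X ∧ ∀ ⦃x⦄, x ∈ I → ∀ ⦃y⦄, y ∈ I → ∀ ⦃z : ℕ⦄, x < z → z < y → z ∈ I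

/-- `I` is a maximal interval of `X`. -/
def IsMaxIntervalOf (I X : Set ℕ) : Prop :=
  IsIntervalOf I X ∧ ∀ J, IsIntervalOf J X → I ⊆ J → I = J

namespace PathPAut

open Finset

section Placement

variable {α : Type*} {L : Finset α} {ℓ : α → ℕ} {n : ℕ}

/-- Block `a ∈ L` occupies the cells `Ico (c a) (c a + ℓ a)` of `{1, …, n}`. -/
structure IsPlacement (L : Finset α) (ℓ : α → ℕ) (n : ℕ) (c : α → ℕ) : Prop where
  eq_zero : ∀ a ∉ L, c a = 0
  one_le : ∀ a ∈ L, 1 ≤ c a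
  add_le : ∀ a ∈ L, c a + ℓ a ≤ n + 1
  pairwise : (L : Set α).Pairwise fun a b => c a + ℓ a < c b ∨ c b + ℓ b < c a

noncomputable def shift (L : Finset α) (ℓ : α → ℕ) (g : α → ℕ) (a : α) : ℕ :=
  ∑ x ∈ L with g x < g a, ℓ x

lemma sum_add_card_le_of_pairwise {S : Finset α} {c : α → ℕ} {lo hi : ℕ}
    (hS : (S : Set α).Pairwise fun a b => c a + ℓ a < c b ∨ c b + ℓ b < c a)
    (hbd : ∀ a ∈ S, lo ≤ c a ∧ c a + ℓ a < hi) :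
    ∑ a ∈ S, ℓ a + #S ≤ hi - lo := by
  induction S using Finset.induction_on_max_value c generalizing hi with
  | empty => simp
  | insert a s has hmax ih =>
    have hs : ∀ x ∈ s, lo ≤ c x ∧ c x + ℓ x < c a := fun x hx => by
      have hxa : x ≠ a := fun h => has (h ▸ hx)
      have := hS (mem_insert_of_mem hx) (mem_insert_self a s) hxa
      have := hmax x hx
      exact ⟨(hbd x (mem_insert_of_mem hx)).1, by omega⟩
    have := ih (hS.mono (by simp)) hs
    have := hbd a (mem_insert_self a s)
    rw [sum_insert has, card_insert_of_notMem has]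
    omega

namespace IsPlacement

variable {c : α → ℕ} (hc : IsPlacement L ℓ n c)
include hc

lemma add_lt_of_lt {a b : α} (ha : a ∈ L) (hb : b ∈ L) (h : c a < c b) : c a + ℓ a < c b := by
  have := hc.pairwise ha hb (by rintro rfl; omega)
  omega

lemma injOn : Set.InjOn c L := fun a ha b hb h => by
  by_contra hab
  have := hc.pairwise ha hb hab
  omega

lemma shift_add_card_lt {a : α} (ha : a ∈ L) : shift L ℓ c a + #{x ∈ L | c x < c a} < c a := by
  have := sum_add_card_le_of_pairwise (S := {x ∈ L | c x < c a}) (lo := 1)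
    (hc.pairwise.mono (coe_subset.2 (filter_subset _ _)))
    (fun x hx => by
      rw [mem_filter] at hx
      exact ⟨hc.one_le x hx.1, hc.add_lt_of_lt hx.1 ha hx.2⟩)
  have := hc.one_le a ha
  unfold shift
  omega

lemma sub_shift_lt_sub_shift {a b : α} (ha : a ∈ L) (hb : b ∈ L) (hab : c a < c b) :
    c a - shift L ℓ c a < c b - shift L ℓ c b := by
  set S := {x ∈ L | c a ≤ c x ∧ c x < c b}
  have hsplit : shift L ℓ c b = shift L ℓ c a + ∑ x ∈ S, ℓ x := by
    unfold shift
    rw [← sum_union (disjoint_filter.2 fun x _ h1 h2 => by omega)]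
    congr 1
    ext x
    simp only [mem_union, mem_filter]
    grind
  have hS := sum_add_card_le_of_pairwise (S := S) (lo := c a) (hi := c b)
    (hc.pairwise.mono (coe_subset.2 (filter_subset _ _)))
    (fun x hx => by
      rw [mem_filter] at hx
      exact ⟨hx.2.1, hc.add_lt_of_lt hx.1 hb hx.2.2⟩)
  have haS : 0 < #S := card_pos.2 ⟨a, mem_filter.2 ⟨ha, le_rfl, hab⟩⟩
  have := hc.shift_add_card_lt ha
  omega

lemma sub_shift_le {a : α} (ha : a ∈ L) :
    c a - shift L ℓ c a ≤ n - ∑ x ∈ L, ℓ x + 1 := by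
  have hsplit := sum_filter_add_sum_filter_not L (fun x => c x < c a) ℓ
  have hS := sum_add_card_le_of_pairwise (S := {x ∈ L | ¬ c x < c a}) (lo := c a) (hi := n + 2)
    (hc.pairwise.mono (coe_subset.2 (filter_subset _ _)))
    (fun x hx => by
      rw [mem_filter] at hx
      exact ⟨not_lt.1 hx.2, by have := hc.add_le x hx.1; omega⟩)
  have haS : 0 < #{x ∈ L | ¬ c x < c a} := card_pos.2 ⟨a, mem_filter.2 ⟨ha, lt_irrefl _⟩⟩
  have := hc.shift_add_card_lt ha
  unfold shift at *
  omega

end IsPlacement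

lemma shift_eq_zero {g : α → ℕ} {a : α} (ha : g a = 0) : shift L ℓ g a = 0 := by
  simp [shift, ha]

lemma shift_congr {g h : α → ℕ} (hgh : ∀ x ∈ L, ∀ y ∈ L, g x < g y ↔ h x < h y) {a : α}
    (ha : a ∈ L) : shift L ℓ g a = shift L ℓ h a :=
  sum_congr (filter_congr fun x hx => hgh x hx a ha) fun _ _ => rfl

lemma shift_add_le_sum {g : α → ℕ} {a : α} {T : Finset α}
    (hT : insert a {x ∈ L | g x < g a} ⊆ T) : shift L ℓ g a + ℓ a ≤ ∑ x ∈ T, ℓ x := by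
  rw [shift, add_comm, ← sum_insert (by simp)]
  exact sum_le_sum_of_subset hT

lemma lt_iff_lt_of_injOn {g h : α → ℕ} (hg : Set.InjOn g L)
    (hgh : ∀ x ∈ L, ∀ y ∈ L, g x < g y → h x < h y) :
    ∀ x ∈ L, ∀ y ∈ L, g x < g y ↔ h x < h y := by
  refine fun x hx y hy => ⟨hgh x hx y hy, fun hxy => ?_⟩
  rcases lt_trichotomy (g x) (g y) with h | h | h
  · exact h
  · rw [hg hx hy h] at hxy
    exact absurd hxy (lt_irrefl _)
  · exact absurd (hgh y hy x hx h) (lt_asymm hxy)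

structure IsInjLabelling (L : Finset α) (m : ℕ) (ν : α → ℕ) : Prop where
  eq_zero : ∀ a ∉ L, ν a = 0
  injOn : Set.InjOn ν L
  mem_Icc : ∀ a ∈ L, ν a ∈ Icc 1 m

lemma card_isInjLabelling (L : Finset α) (m : ℕ) :
    Nat.card {ν : α → ℕ // IsInjLabelling L m ν} = m.descFactorial #L := by
  let e : {ν : α → ℕ // IsInjLabelling L m ν} ≃ (L ↪ Icc 1 m) :=
    { toFun := fun ν => ⟨fun a => ⟨ν.1 a, ν.2.mem_Icc a a.2⟩,
        fun a b h => Subtype.ext (ν.2.injOn a.2 b.2 (congrArg Subtype.val h))⟩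
      invFun := fun e => ⟨fun x => if h : x ∈ L then e ⟨x, h⟩ else 0,
        { eq_zero := fun x hx => dif_neg hx
          injOn := fun a ha b hb h => by
            dsimp only at h
            rw [dif_pos (mem_coe.1 ha), dif_pos (mem_coe.1 hb)] at h
            exact congrArg Subtype.val (e.injective (Subtype.ext h))
          mem_Icc := fun a ha => by simp only [dif_pos ha]; exact (e ⟨a, ha⟩).2 }⟩
      left_inv := fun ν => Subtype.ext <| funext fun x => by
        by_cases hx : x ∈ L
        · simp only [dif_pos hx]; rfl
        · simp [hx, ν.2.eq_zero x hx]
      right_inv := fun e => by ext; simp }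
  rw [Nat.card_congr e, Nat.card_eq_fintype_card, Fintype.card_embedding_eq]
  simp

lemma add_shift_add_lt {ν : α → ℕ} {a b : α} (ha : a ∈ L) (hab : ν a < ν b) :
    ν a + shift L ℓ ν a + ℓ a < ν b + shift L ℓ ν b := by
  have := shift_add_le_sum (ℓ := ℓ) (T := {x ∈ L | ν x < ν b}) fun x hx => by
    rcases mem_insert.1 hx with rfl | hx
    · exact mem_filter.2 ⟨ha, hab⟩
    · rw [mem_filter] at hx ⊢
      exact ⟨hx.1, hx.2.trans hab⟩
  unfold shift at this ⊢
  omega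

lemma IsInjLabelling.isPlacement {ν : α → ℕ} (hν : IsInjLabelling L (n - ∑ x ∈ L, ℓ x + 1) ν)
    (hs : ∑ x ∈ L, ℓ x ≤ n) : IsPlacement L ℓ n fun a => ν a + shift L ℓ ν a where
  eq_zero a ha := by simp [hν.eq_zero a ha, shift_eq_zero]
  one_le a ha := by have := (Finset.mem_Icc.1 (hν.mem_Icc a ha)).1; omega
  add_le a ha := by
    have := shift_add_le_sum (ℓ := ℓ) (g := ν) (insert_subset ha (filter_subset _ _))
    have := (Finset.mem_Icc.1 (hν.mem_Icc a ha)).2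
    omega
  pairwise a ha b hb hab := by
    rcases lt_or_gt_of_ne (hν.injOn.ne ha hb hab) with h | h
    · exact Or.inl (add_shift_add_lt ha h)
    · exact Or.inr (add_shift_add_lt hb h)

lemma IsPlacement.isInjLabelling {c : α → ℕ} (hc : IsPlacement L ℓ n c) :
    IsInjLabelling L (n - ∑ x ∈ L, ℓ x + 1) fun a => c a - shift L ℓ c a where
  eq_zero a ha := by simp [hc.eq_zero a ha]
  injOn a ha b hb h := by
    by_contra hab
    rcases lt_or_gt_of_ne (hc.injOn.ne ha hb hab) with h' | h'
    · exact absurd h (hc.sub_shift_lt_sub_shift ha hb h').ne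
    · exact absurd h (hc.sub_shift_lt_sub_shift hb ha h').ne'
  mem_Icc a ha := by
    have := hc.shift_add_card_lt ha
    exact mem_Icc.2 ⟨by omega, hc.sub_shift_le ha⟩

noncomputable def placementEquiv (hs : ∑ x ∈ L, ℓ x ≤ n) :
    {c : α → ℕ // IsPlacement L ℓ n c} ≃
      {ν : α → ℕ // IsInjLabelling L (n - ∑ x ∈ L, ℓ x + 1) ν} where
  toFun c := ⟨_, c.2.isInjLabelling⟩
  invFun ν := ⟨_, ν.2.isPlacement hs⟩
  left_inv := fun ⟨c, hc⟩ => Subtype.ext <| funext fun a => by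
    by_cases ha : a ∈ L
    · have hsh : shift L ℓ (fun x => c x - shift L ℓ c x) a = shift L ℓ c a :=
        (shift_congr (lt_iff_lt_of_injOn hc.injOn fun x hx y hy =>
          hc.sub_shift_lt_sub_shift hx hy) ha).symm
      have := hc.shift_add_card_lt ha
      simp only [hsh]
      omega
    · simp [hc.eq_zero a ha, shift_eq_zero]
  right_inv := fun ⟨ν, hν⟩ => Subtype.ext <| funext fun a => by
    by_cases ha : a ∈ L
    · have hsh : shift L ℓ (fun x => ν x + shift L ℓ ν x) a = shift L ℓ ν a :=
        (shift_congr (lt_iff_lt_of_injOn hν.injOn fun x hx y hy h =>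
          (Nat.lt_of_le_of_lt (Nat.le_add_right _ _) (add_shift_add_lt hx h))) ha).symm
      simp only [hsh]
      omega
    · simp [hν.eq_zero a ha, shift_eq_zero]

lemma card_isPlacement (hs : ∑ x ∈ L, ℓ x ≤ n) :
    Nat.card {c : α → ℕ // IsPlacement L ℓ n c} =
      (#L).factorial * (n - ∑ x ∈ L, ℓ x + 1).choose #L := by
  rw [Nat.card_congr (placementEquiv hs), card_isInjLabelling,
    Nat.descFactorial_eq_factorial_mul_choose]

end Placement

lemma card_bool_support_subset {α : Type*} (T : Finset α) :
    Nat.card {ε : α → Bool // ∀ a, ε a = true → a ∈ T} = 2 ^ #T := by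
  let e : {ε : α → Bool // ∀ a, ε a = true → a ∈ T} ≃ T.powerset :=
    { toFun := fun ε => ⟨{a ∈ T | ε.1 a}, mem_powerset.2 (filter_subset _ _)⟩
      invFun := fun S => ⟨fun a => decide (a ∈ S.1), fun a ha =>
        mem_powerset.1 S.2 (of_decide_eq_true ha)⟩
      left_inv := fun ε => Subtype.ext <| funext fun a => by
        by_cases ha : ε.1 a <;> simp [ha, fun h => ε.2 a h]
      right_inv := fun S => Subtype.ext <| by
        ext a
        simpa using fun h => mem_powerset.1 S.2 h }
  rw [Nat.card_congr e, Nat.card_eq_fintype_card, Fintype.card_coe, card_powerset]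

section Runs

variable {D : Set ℕ} {n : ℕ}

noncomputable def runLength (D : Set ℕ) (a : ℕ) : ℕ := sInf {k | a + k ∉ D}

noncomputable def runStart (D : Set ℕ) (x : ℕ) : ℕ := sInf {y | Set.Icc y x ⊆ D}

noncomputable def runStarts (D : Set ℕ) (n : ℕ) : Finset ℕ :=
  {a ∈ Finset.Icc 1 n | a ∈ D ∧ a - 1 ∉ D}

lemma mem_of_mem_runStarts {a : ℕ} (ha : a ∈ runStarts D n) : a ∈ D :=
  (Finset.mem_filter.1 ha).2.1

def run (D : Set ℕ) (a : ℕ) : Set ℕ := Set.Ico a (a + runLength D a)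

lemma run_subset_self (a : ℕ) : run D a ⊆ D := fun x ⟨h1, h2⟩ => by
  have := Nat.notMem_of_lt_sInf (s := {k | a + k ∉ D}) (show x - a < runLength D a by omega)
  simpa [Nat.add_sub_cancel' h1] using this

lemma Icc_runStart_subset {x : ℕ} (hx : x ∈ D) : Set.Icc (runStart D x) x ⊆ D :=
  Nat.sInf_mem (s := {y | Set.Icc y x ⊆ D}) ⟨x, by simpa using hx⟩

lemma runStart_le {x : ℕ} (hx : x ∈ D) : runStart D x ≤ x :=
  Nat.sInf_le (by simpa using hx)

variable (hD : D ⊆ Set.Icc 1 n)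
include hD

lemma add_runLength_notMem (a : ℕ) : a + runLength D a ∉ D :=
  Nat.sInf_mem (s := {k | a + k ∉ D}) ⟨n + 1, fun h => by have := (hD h).2; omega⟩

lemma runLength_pos {a : ℕ} (ha : a ∈ D) : 0 < runLength D a :=
  Nat.pos_of_ne_zero fun h => add_runLength_notMem hD a (by rwa [h, add_zero])

lemma mem_run_self {a : ℕ} (ha : a ∈ D) : a ∈ run D a := by
  have := runLength_pos hD ha
  simp only [run, Set.mem_Ico]
  omega

lemma add_runLength_sub_one_mem_run {a : ℕ} (ha : a ∈ D) : a + runLength D a - 1 ∈ run D a := by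
  have := runLength_pos hD ha
  exact ⟨by omega, by omega⟩

lemma mem_runStarts {a : ℕ} : a ∈ runStarts D n ↔ a ∈ D ∧ a - 1 ∉ D := by
  simp only [runStarts, Finset.mem_filter, Finset.mem_Icc, and_iff_right_iff_imp]
  exact fun h => hD h.1

lemma runStart_sub_one_notMem {x : ℕ} (hx : x ∈ D) : runStart D x - 1 ∉ D := fun h => by
  have hs := Icc_runStart_subset hx
  have hpos : 1 ≤ runStart D x := (hD (hs ⟨le_rfl, runStart_le hx⟩)).1
  have : runStart D x ≤ runStart D x - 1 := Nat.sInf_le (s := {y | Set.Icc y x ⊆ D})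
    fun y hy => by
      rcases eq_or_ne y (runStart D x - 1) with rfl | hne
      · exact h
      · exact hs ⟨by have := hy.1; omega, hy.2⟩
  omega

lemma runStart_mem_runStarts {x : ℕ} (hx : x ∈ D) : runStart D x ∈ runStarts D n :=
  (mem_runStarts hD).2
    ⟨Icc_runStart_subset hx ⟨le_rfl, runStart_le hx⟩, runStart_sub_one_notMem hD hx⟩

lemma mem_run_runStart {x : ℕ} (hx : x ∈ D) : x ∈ run D (runStart D x) := by
  refine ⟨runStart_le hx, not_le.1 fun h => add_runLength_notMem hD (runStart D x) ?_⟩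
  exact Icc_runStart_subset hx ⟨Nat.le_add_right _ _, h⟩

lemma runStart_eq_of_mem_run {a x : ℕ} (ha : a ∈ runStarts D n) (hx : x ∈ run D a) :
    runStart D x = a := by
  have hxD := run_subset_self a hx
  obtain ⟨-, hap⟩ := (mem_runStarts hD).1 ha
  refine le_antisymm (Nat.sInf_le fun y hy => run_subset_self a ⟨hy.1, ?_⟩) ?_
  · exact lt_of_le_of_lt hy.2 hx.2
  · by_contra! h
    exact hap (Icc_runStart_subset hxD ⟨by omega, by have := hx.1; omega⟩)

lemma runStart_eq_of_adj {x y : ℕ} (hx : x ∈ D) (hy : y ∈ D) (hxy : adj x y) :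
    runStart D x = runStart D y := by
  wlog h : x + 1 = y generalizing x y
  · exact (this hy hx hxy.symm (hxy.resolve_left h)).symm
  subst h
  have hxr := mem_run_runStart hD hx
  refine (runStart_eq_of_mem_run hD (runStart_mem_runStarts hD hx) ⟨?_, ?_⟩).symm
  · exact (Nat.le_succ_of_le hxr.1)
  · refine lt_of_le_of_ne hxr.2 fun h => add_runLength_notMem hD (runStart D x) (h ▸ hy)

end Runs

lemma IsIntervalOf.mem_of_le_of_le {I X : Set ℕ} (hI : IsIntervalOf I X) {x y z : ℕ}
    (hx : x ∈ I) (hy : y ∈ I) (hxz : x ≤ z) (hzy : z ≤ y) : z ∈ I := by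
  rcases hxz.eq_or_lt with rfl | hxz
  · exact hx
  rcases hzy.eq_or_lt with rfl | hzy
  · exact hy
  exact hI.2 hx hy hxz hzy

section MaxIntervals

variable {D : Set ℕ} {n : ℕ}

lemma isIntervalOf_run (a : ℕ) : IsIntervalOf (run D a) D :=
  ⟨run_subset_self a, fun _ hx _ hy _ hxz hzy => ⟨hx.1.trans hxz.le, hzy.trans hy.2⟩⟩

lemma ncard_run (a : ℕ) : (run D a).ncard = runLength D a := by
  rw [run, ← Finset.coe_Ico, Set.ncard_coe_finset, Nat.card_Ico, Nat.add_sub_cancel_left]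

variable (hD : D ⊆ Set.Icc 1 n)
include hD

lemma IsIntervalOf.subset_run {I : Set ℕ} (hI : IsIntervalOf I D) {x : ℕ} (hx : x ∈ I) :
    I ⊆ run D (runStart D x) := by
  have hxD := hI.1 hx
  have hxr := mem_run_runStart hD hxD
  intro y hy
  by_contra hyr
  simp only [run, Set.mem_Ico, not_and_or, not_le, not_lt] at hyr hxr
  rcases hyr with hlt | hge
  · exact runStart_sub_one_notMem hD hxD
      (hI.1 (IsIntervalOf.mem_of_le_of_le hI hy hx (by omega) (by omega)))
  · exact add_runLength_notMem hD _ (hI.1 (IsIntervalOf.mem_of_le_of_le hI hx hy hxr.2.le hge))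

lemma isMaxIntervalOf_run {a : ℕ} (ha : a ∈ runStarts D n) : IsMaxIntervalOf (run D a) D := by
  have haD := mem_of_mem_runStarts ha
  refine ⟨isIntervalOf_run a, fun J hJ hJa => (hJa.antisymm ?_)⟩
  rw [← runStart_eq_of_mem_run hD ha (mem_run_self hD haD)]
  exact IsIntervalOf.subset_run hD hJ (hJa (mem_run_self hD haD))

lemma isMaxIntervalOf_iff (hne : D.Nonempty) {I : Set ℕ} :
    IsMaxIntervalOf I D ↔ ∃ a ∈ runStarts D n, run D a = I := by
  refine ⟨fun hI => ?_, fun ⟨a, ha, hI⟩ => hI ▸ isMaxIntervalOf_run hD ha⟩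
  obtain ⟨x, hx⟩ : I.Nonempty := by
    obtain ⟨d, hd⟩ := hne
    by_contra h
    have hsingle : IsIntervalOf {d} D :=
      ⟨Set.singleton_subset_iff.2 hd, fun x hx y hy z h1 h2 => by simp_all; omega⟩
    have := hI.2 {d} hsingle (by simp [Set.not_nonempty_iff_eq_empty.1 h])
    simp [Set.not_nonempty_iff_eq_empty.1 h] at this
  refine ⟨runStart D x, runStart_mem_runStarts hD (hI.1.1 hx), ?_⟩
  exact (hI.2 _ (isIntervalOf_run _) (IsIntervalOf.subset_run hD hI.1 hx)).symm

lemma run_injOn : Set.InjOn (run D) (runStarts D n) := fun a ha b hb h => by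
  have haD := mem_of_mem_runStarts ha
  rw [← runStart_eq_of_mem_run hD ha (mem_run_self hD haD),
    runStart_eq_of_mem_run hD hb (h ▸ mem_run_self hD haD)]

lemma ncard_setOf_isMaxIntervalOf (hne : D.Nonempty) :
    {I | IsMaxIntervalOf I D}.ncard = #(runStarts D n) := by
  have : {I | IsMaxIntervalOf I D} = run D '' runStarts D n := by
    ext I
    simp [isMaxIntervalOf_iff hD hne]
  rw [this, (run_injOn hD).ncard_image, Set.ncard_coe_finset]

lemma ncard_setOf_isMaxIntervalOf_two_le (hne : D.Nonempty) :
    {I | IsMaxIntervalOf I D ∧ 2 ≤ I.ncard}.ncard = #{a ∈ runStarts D n | 2 ≤ runLength D a} := by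
  have : {I | IsMaxIntervalOf I D ∧ 2 ≤ I.ncard} =
      run D '' ↑{a ∈ runStarts D n | 2 ≤ runLength D a} := by
    ext I
    simp only [Set.mem_ofPred, isMaxIntervalOf_iff hD hne, coe_filter, Set.mem_image]
    constructor
    · rintro ⟨⟨a, ha, rfl⟩, h2⟩
      exact ⟨a, ⟨ha, ncard_run a ▸ h2⟩, rfl⟩
    · rintro ⟨a, ⟨ha, h2⟩, rfl⟩
      exact ⟨⟨a, ha, rfl⟩, (ncard_run a).symm ▸ h2⟩
  rw [this, ((run_injOn hD).mono (filter_subset _ _)).ncard_image, Set.ncard_coe_finset]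

lemma sum_runLength : ∑ a ∈ runStarts D n, runLength D a = D.ncard := by
  have hD' : D = ↑((runStarts D n).biUnion fun a => Finset.Ico a (a + runLength D a)) := by
    ext x
    simp only [coe_biUnion, coe_Ico, Set.mem_iUnion, exists_prop]
    exact ⟨fun hx => ⟨_, runStart_mem_runStarts hD hx, mem_run_runStart hD hx⟩,
      fun ⟨a, _, hx⟩ => run_subset_self a hx⟩
  rw [congrArg Set.ncard hD', Set.ncard_coe_finset, card_biUnion]
  · simp
  · intro a ha b hb hab
    refine Finset.disjoint_left.2 fun x hxa hxb => hab ?_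
    replace hxa : x ∈ run D a := by simpa [run] using hxa
    replace hxb : x ∈ run D b := by simpa [run] using hxb
    rw [← runStart_eq_of_mem_run hD ha hxa, runStart_eq_of_mem_run hD hb hxb]

end MaxIntervals

section PFun

variable {α β : Type*} {s : Set α}

lemma dom_res (g : α → β) (s : Set α) : (PFun.res g s).Dom = s := by
  ext x
  simp [PFun.dom_eq, PFun.mem_res]

lemma res_congr {g g' : α → β} (h : Set.EqOn g g' s) : PFun.res g s = PFun.res g' s := by
  ext x y
  simp only [PFun.mem_res]
  exact ⟨fun ⟨hx, hy⟩ => ⟨hx, (h hx).symm.trans hy⟩, fun ⟨hx, hy⟩ => ⟨hx, (h hx).trans hy⟩⟩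

lemma getOrElse_res {g : α → β} {x : α} (hx : x ∈ s) (d : β) :
    (PFun.res g s x).getOrElse d = g x := by
  have hdom : x ∈ (PFun.res g s).Dom := (dom_res g s).symm ▸ hx
  rw [Part.getOrElse_of_dom _ hdom]
  exact ((PFun.mem_res _ _ _ _).1 (Part.get_mem hdom)).2

lemma res_getOrElse {f : α →. β} (hf : f.Dom = s) (d : β) :
    PFun.res (fun x => (f x).getOrElse d) s = f := by
  ext x y
  rw [PFun.mem_res, ← hf]
  refine ⟨fun ⟨hx, hy⟩ => ?_, fun hy => ⟨Part.dom_iff_mem.2 ⟨y, hy⟩, ?_⟩⟩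
  · rw [← hy, Part.getOrElse_of_dom _ hx]
    exact Part.get_mem _
  · rw [Part.getOrElse_of_dom _ (Part.dom_iff_mem.2 ⟨y, hy⟩)]
    exact Part.get_eq_of_mem hy _

end PFun

section PartialMaps

variable {D : Set ℕ} {n : ℕ}

structure IsPAutOn (D : Set ℕ) (n : ℕ) (g : ℕ → ℕ) : Prop where
  mapsTo : Set.MapsTo g D (Set.Icc 1 n)
  injOn : Set.InjOn g D
  adj_iff : ∀ ⦃x⦄, x ∈ D → ∀ ⦃y⦄, y ∈ D → (adj (g x) (g y) ↔ adj x y)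

lemma isPAut_res_iff (hD : D ⊆ Set.Icc 1 n) {g : ℕ → ℕ} :
    IsPAut n (PFun.res g D) ↔ IsPAutOn D n g := by
  have hmem : ∀ {x y}, y ∈ PFun.res g D x ↔ x ∈ D ∧ g x = y := PFun.mem_res _ _ _ _
  constructor
  · rintro ⟨hf, hrev⟩
    have hg : ∀ {x}, x ∈ D → g x ∈ PFun.res g D x := fun hx => hmem.2 ⟨hx, rfl⟩
    exact ⟨fun x hx => hf.ran_subset ⟨x, hg hx⟩, fun x hx y hy h => hf.inj (hg hx) (h ▸ hg hy),
      fun x hx y hy => ⟨hrev (hg hx) (hg hy), hf.edge (hg hx) (hg hy)⟩⟩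
  · intro hg
    refine ⟨⟨dom_res g D ▸ hD, ?_, ?_, ?_⟩, ?_⟩
    · rintro _ ⟨x, hx⟩
      obtain ⟨hxD, rfl⟩ := hmem.1 hx
      exact hg.mapsTo hxD
    · intro x y a hx hy
      obtain ⟨hxD, rfl⟩ := hmem.1 hx
      obtain ⟨hyD, hxy⟩ := hmem.1 hy
      exact hg.injOn hxD hyD hxy.symm
    · intro u v a b ha hb huv
      obtain ⟨hu, rfl⟩ := hmem.1 ha
      obtain ⟨hv, rfl⟩ := hmem.1 hb
      exact (hg.adj_iff hu hv).2 huv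
    · intro u v a b ha hb hab
      obtain ⟨hu, rfl⟩ := hmem.1 ha
      obtain ⟨hv, rfl⟩ := hmem.1 hb
      exact (hg.adj_iff hu hv).1 hab

end PartialMaps

section BlockMap

variable {D : Set ℕ} {n : ℕ}

/-- Maps the run starting at `a` onto `Ico (c a) (c a + runLength D a)`, in increasing order,
or in decreasing order if `ε a`. -/
noncomputable def blockMap (D : Set ℕ) (c : ℕ → ℕ) (ε : ℕ → Bool) (x : ℕ) : ℕ :=
  let a := runStart D x
  c a + if ε a then a + runLength D a - 1 - x else x - a

variable (hD : D ⊆ Set.Icc 1 n) {c : ℕ → ℕ} {ε : ℕ → Bool}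
include hD

lemma blockMap_of_mem_run {a x : ℕ} (ha : a ∈ runStarts D n) (hx : x ∈ run D a) :
    blockMap D c ε x = c a + if ε a then a + runLength D a - 1 - x else x - a := by
  rw [blockMap, runStart_eq_of_mem_run hD ha hx]

lemma image_run_blockMap {a : ℕ} (ha : a ∈ runStarts D n) :
    blockMap D c ε '' run D a = Set.Ico (c a) (c a + runLength D a) := by
  ext u
  constructor
  · rintro ⟨x, hx, rfl⟩
    rw [blockMap_of_mem_run hD ha hx]
    obtain ⟨h1, h2⟩ := hx
    constructor <;> split_ifs <;> omega
  · rintro ⟨h1, h2⟩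
    cases hε : ε a
    · refine ⟨a + (u - c a), ⟨by omega, by omega⟩, ?_⟩
      rw [blockMap_of_mem_run hD ha ⟨by omega, by omega⟩, hε]
      simp only [Bool.false_eq_true, if_false]
      omega
    · refine ⟨a + runLength D a - 1 - (u - c a), ⟨by omega, by omega⟩, ?_⟩
      rw [blockMap_of_mem_run hD ha ⟨by omega, by omega⟩, hε]
      simp only [if_true]
      omega

lemma blockMap_mem_Ico {x : ℕ} (hx : x ∈ D) :
    blockMap D c ε x ∈ Set.Ico (c (runStart D x)) (c (runStart D x) + runLength D (runStart D x)) :=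
  image_run_blockMap hD (runStart_mem_runStarts hD hx) ▸ ⟨x, mem_run_runStart hD hx, rfl⟩

lemma blockMap_eq_iff_and_adj_iff (hc : IsPlacement (runStarts D n) (runLength D) n c)
    {x y : ℕ} (hx : x ∈ D) (hy : y ∈ D) :
    (blockMap D c ε x = blockMap D c ε y ↔ x = y) ∧
      (adj (blockMap D c ε x) (blockMap D c ε y) ↔ adj x y) := by
  have hbx := blockMap_mem_Ico hD (c := c) (ε := ε) hx
  have hby := blockMap_mem_Ico hD (c := c) (ε := ε) hy
  by_cases h : runStart D x = runStart D y
  · have hxr := mem_run_runStart hD hx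
    have hyr := mem_run_runStart hD hy
    have ha := runStart_mem_runStarts hD hx
    rw [← h] at hyr
    rw [blockMap_of_mem_run hD ha hxr, blockMap_of_mem_run hD ha hyr]
    obtain ⟨hx1, hx2⟩ := hxr
    obtain ⟨hy1, hy2⟩ := hyr
    unfold adj
    split_ifs <;> omega
  · have hnadj : ¬ adj x y := fun hxy => h (runStart_eq_of_adj hD hx hy hxy)
    have := hc.pairwise (runStart_mem_runStarts hD hx) (runStart_mem_runStarts hD hy) h
    have hxy : x ≠ y := fun hxy => h (hxy ▸ rfl)
    obtain ⟨hbx1, hbx2⟩ := hbx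
    obtain ⟨hby1, hby2⟩ := hby
    unfold adj at hnadj ⊢
    omega

lemma isPAutOn_blockMap (hc : IsPlacement (runStarts D n) (runLength D) n c) :
    IsPAutOn D n (blockMap D c ε) where
  mapsTo x hx := by
    have ha := runStart_mem_runStarts hD hx
    have := hc.one_le _ ha
    have := hc.add_le _ ha
    obtain ⟨h1, h2⟩ := blockMap_mem_Ico hD (c := c) (ε := ε) hx
    exact ⟨by omega, by omega⟩
  injOn x hx y hy := ((blockMap_eq_iff_and_adj_iff hD hc hx hy).1).1
  adj_iff x hx y hy := (blockMap_eq_iff_and_adj_iff hD hc hx hy).2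

end BlockMap

lemma eq_add_or_add_eq_of_adj {u : ℕ → ℕ} {m : ℕ} (hadj : ∀ j < m, adj (u j) (u (j + 1)))
    (hne : ∀ j, j + 2 ≤ m → u (j + 2) ≠ u j) :
    (∀ j ≤ m, u j = u 0 + j) ∨ (∀ j ≤ m, u j + j = u 0) := by
  induction m with
  | zero => exact Or.inl fun j hj => by simp [Nat.le_zero.1 hj]
  | succ m ih =>
    have ih := ih (fun j hj => hadj j (by omega)) (fun j hj => hne j (by omega))
    have hm := hadj m (by omega)
    unfold adj at hm
    rcases Nat.eq_zero_or_pos m with rfl | hpos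
    · rw [zero_add] at hm
      rcases hm with h | h
      · exact Or.inl fun j hj => by interval_cases j <;> omega
      · exact Or.inr fun j hj => by interval_cases j <;> omega
    · have hne' := hne (m - 1) (by omega)
      rw [show m - 1 + 2 = m + 1 by omega] at hne'
      -- `u (m + 1) ≠ u (m - 1)` forces the last step to go the same way as the previous ones.
      rcases ih with h | h
      · refine Or.inl fun j hj => ?_
        rcases Nat.lt_or_ge j (m + 1) with hj' | hj'
        · exact h j (by omega)
        · obtain rfl : j = m + 1 := by omega
          have := h m le_rfl
          have := h (m - 1) (by omega)
          omega
      · refine Or.inr fun j hj => ?_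
        rcases Nat.lt_or_ge j (m + 1) with hj' | hj'
        · exact h j (by omega)
        · obtain rfl : j = m + 1 := by omega
          have := h m le_rfl
          have := h (m - 1) (by omega)
          omega

lemma exists_mem_Ico_eq_or_adj {p k q m : ℕ} (hk : 0 < k) (hm : 0 < m)
    (h : ¬ (p + k < q ∨ q + m < p)) :
    ∃ u ∈ Set.Ico p (p + k), ∃ v ∈ Set.Ico q (q + m), u = v ∨ adj u v := by
  rcases le_total p q with hpq | hqp
  · by_cases hq : q < p + k
    · exact ⟨q, ⟨hpq, hq⟩, q, ⟨le_rfl, by omega⟩, Or.inl rfl⟩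
    · exact ⟨p + k - 1, ⟨by omega, by omega⟩, q, ⟨le_rfl, by omega⟩, Or.inr (Or.inl (by omega))⟩
  · by_cases hp : p < q + m
    · exact ⟨p, ⟨le_rfl, by omega⟩, p, ⟨hqp, hp⟩, Or.inl rfl⟩
    · exact ⟨p, ⟨le_rfl, by omega⟩, q + m - 1, ⟨by omega, by omega⟩, Or.inr (Or.inr (by omega))⟩

section Decomposition

variable {D : Set ℕ} {n : ℕ}

noncomputable def placementOf (D : Set ℕ) (n : ℕ) (g : ℕ → ℕ) (a : ℕ) : ℕ :=
  if a ∈ runStarts D n then min (g a) (g (a + runLength D a - 1)) else 0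

noncomputable def orientationOf (D : Set ℕ) (n : ℕ) (g : ℕ → ℕ) (a : ℕ) : Bool :=
  decide (a ∈ runStarts D n ∧ g (a + runLength D a - 1) < g a)

variable (hD : D ⊆ Set.Icc 1 n)
include hD

lemma placementOf_congr {g g' : ℕ → ℕ} (h : Set.EqOn g g' D) :
    placementOf D n g = placementOf D n g' := funext fun a => by
  unfold placementOf
  split_ifs with ha
  · have haD := mem_of_mem_runStarts ha
    rw [h haD, h (run_subset_self a (add_runLength_sub_one_mem_run hD haD))]
  · rfl

lemma orientationOf_congr {g g' : ℕ → ℕ} (h : Set.EqOn g g' D) :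
    orientationOf D n g = orientationOf D n g' := funext fun a => by
  unfold orientationOf
  by_cases ha : a ∈ runStarts D n
  · have haD := mem_of_mem_runStarts ha
    rw [h haD, h (run_subset_self a (add_runLength_sub_one_mem_run hD haD))]
  · simp [ha]

lemma mem_of_orientationOf_eq_true {g : ℕ → ℕ} {a : ℕ} (h : orientationOf D n g a = true) :
    a ∈ {a ∈ runStarts D n | 2 ≤ runLength D a} := by
  obtain ⟨ha, hlt⟩ := of_decide_eq_true h
  have := runLength_pos hD (mem_of_mem_runStarts ha)
  refine mem_filter.2 ⟨ha, ?_⟩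
  by_contra h1
  rw [show a + runLength D a - 1 = a by omega] at hlt
  exact lt_irrefl _ hlt

lemma placementOf_blockMap {c : ℕ → ℕ} (hc : ∀ a ∉ runStarts D n, c a = 0) (ε : ℕ → Bool) :
    placementOf D n (blockMap D c ε) = c := funext fun a => by
  unfold placementOf
  split_ifs with ha
  · have haD := mem_of_mem_runStarts ha
    rw [blockMap_of_mem_run hD ha (mem_run_self hD haD),
      blockMap_of_mem_run hD ha (add_runLength_sub_one_mem_run hD haD)]
    split_ifs <;> omega
  · exact (hc a ha).symm

lemma orientationOf_blockMap {ε : ℕ → Bool}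
    (hε : ∀ a, ε a = true → a ∈ {a ∈ runStarts D n | 2 ≤ runLength D a}) (c : ℕ → ℕ) :
    orientationOf D n (blockMap D c ε) = ε := funext fun a => by
  unfold orientationOf
  by_cases ha : a ∈ runStarts D n
  · have haD := mem_of_mem_runStarts ha
    rw [blockMap_of_mem_run hD ha (mem_run_self hD haD),
      blockMap_of_mem_run hD ha (add_runLength_sub_one_mem_run hD haD)]
    have := runLength_pos hD haD
    cases hεa : ε a
    · simp
    · have := (mem_filter.1 (hε a hεa)).2
      simp only [if_true, decide_eq_true_eq]
      exact ⟨ha, by omega⟩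
  · have : ε a = false := Bool.eq_false_iff.2 fun h => ha (mem_filter.1 (hε a h)).1
    simp [ha, this]

namespace IsPAutOn

variable {g : ℕ → ℕ} (hg : IsPAutOn D n g)
include hg

omit hD in
lemma progression (a : ℕ) :
    (∀ j < runLength D a, g (a + j) = g a + j) ∨ (∀ j < runLength D a, g (a + j) + j = g a) := by
  have hmem : ∀ j < runLength D a, a + j ∈ D := fun j hj => run_subset_self a ⟨by omega, by omega⟩
  have := eq_add_or_add_eq_of_adj (u := fun j => g (a + j)) (m := runLength D a - 1)
    (fun j hj => (hg.adj_iff (hmem j (by omega)) (hmem (j + 1) (by omega))).2 (Or.inl rfl))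
    (fun j hj h => by
      have := hg.injOn (hmem (j + 2) (by omega)) (hmem j (by omega)) h
      omega)
  simp only [add_zero] at this
  exact this.imp (fun h j hj => h j (by omega)) (fun h j hj => h j (by omega))

lemma blockMap_eq {x : ℕ} (hx : x ∈ D) :
    blockMap D (placementOf D n g) (orientationOf D n g) x = g x := by
  have ha := runStart_mem_runStarts hD hx
  have hxr := mem_run_runStart hD hx
  set a := runStart D x
  rw [blockMap_of_mem_run hD ha hxr]
  obtain ⟨h1, h2⟩ := hxr
  have hx' := Nat.add_sub_cancel' h1
  have hlast : a + (runLength D a - 1) = a + runLength D a - 1 := by omega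
  simp only [placementOf, orientationOf, ha, true_and, if_true, decide_eq_true_eq]
  rcases hg.progression a with hp | hp <;>
  · have e1 := hp (x - a) (by omega)
    have e2 := hp (runLength D a - 1) (by omega)
    rw [hx'] at e1
    rw [hlast] at e2
    split_ifs <;> omega

lemma image_run {a : ℕ} (ha : a ∈ runStarts D n) :
    g '' run D a = Set.Ico (placementOf D n g a) (placementOf D n g a + runLength D a) := by
  rw [← image_run_blockMap hD ha (ε := orientationOf D n g)]
  exact Set.image_congr fun x hx => (hg.blockMap_eq hD (run_subset_self a hx)).symm

lemma isPlacement_placementOf :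
    IsPlacement (runStarts D n) (runLength D) n (placementOf D n g) where
  eq_zero a ha := if_neg ha
  one_le a ha := by
    have := runLength_pos hD (mem_of_mem_runStarts ha)
    obtain ⟨x, hx, hgx⟩ := (hg.image_run hD ha).superset (Set.left_mem_Ico.2 (by omega))
    exact hgx ▸ (hg.mapsTo (run_subset_self a hx)).1
  add_le a ha := by
    have := runLength_pos hD (mem_of_mem_runStarts ha)
    obtain ⟨x, hx, hgx⟩ := (hg.image_run hD ha).superset
      (⟨by omega, by omega⟩ : placementOf D n g a + runLength D a - 1 ∈ Set.Ico _ _)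
    have := (hg.mapsTo (run_subset_self a hx)).2
    omega
  pairwise a ha b hb hab := by
    by_contra h
    obtain ⟨u, hu, v, hv, huv⟩ := exists_mem_Ico_eq_or_adj
      (runLength_pos hD (mem_of_mem_runStarts ha)) (runLength_pos hD (mem_of_mem_runStarts hb)) h
    obtain ⟨x, hx, rfl⟩ := (hg.image_run hD ha).superset hu
    obtain ⟨y, hy, rfl⟩ := (hg.image_run hD hb).superset hv
    have hxD := run_subset_self a hx
    have hyD := run_subset_self b hy
    have hxy : runStart D x = runStart D y := by
      rcases huv with huv | huv
      · rw [hg.injOn hxD hyD huv]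
      · exact runStart_eq_of_adj hD hxD hyD ((hg.adj_iff hxD hyD).1 huv)
    rw [runStart_eq_of_mem_run hD ha hx, runStart_eq_of_mem_run hD hb hy] at hxy
    exact hab hxy

end IsPAutOn

end Decomposition

section Count

variable {D : Set ℕ} {n : ℕ}

lemma isPAutOn_getOrElse (hD : D ⊆ Set.Icc 1 n) {f : ℕ →. ℕ} (hf : IsPAut n f) (hdom : f.Dom = D) :
    IsPAutOn D n fun x => (f x).getOrElse 0 :=
  (isPAut_res_iff hD).1 ((res_getOrElse hdom 0).symm ▸ hf)

noncomputable def pAutEquiv (hD : D ⊆ Set.Icc 1 n) :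
    {f : ℕ →. ℕ | IsPAut n f ∧ f.Dom = D} ≃
      {c : ℕ → ℕ // IsPlacement (runStarts D n) (runLength D) n c} ×
        {ε : ℕ → Bool // ∀ a, ε a = true → a ∈ {a ∈ runStarts D n | 2 ≤ runLength D a}} where
  toFun f :=
    (⟨_, (isPAutOn_getOrElse hD f.2.1 f.2.2).isPlacement_placementOf hD⟩,
      ⟨orientationOf D n fun x => (f.1 x).getOrElse 0, fun _ => mem_of_orientationOf_eq_true hD⟩)
  invFun p := ⟨PFun.res (blockMap D p.1 p.2) D,
    (isPAut_res_iff hD).2 (isPAutOn_blockMap hD p.1.2), dom_res _ _⟩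
  left_inv f := Subtype.ext <| by
    conv_rhs => rw [← res_getOrElse f.2.2 0]
    exact res_congr fun x hx => (isPAutOn_getOrElse hD f.2.1 f.2.2).blockMap_eq hD hx
  right_inv p := by
    have h : Set.EqOn (fun x => (PFun.res (blockMap D p.1 p.2) D x).getOrElse 0)
        (blockMap D p.1 p.2) D := fun x hx => getOrElse_res hx 0
    ext x
    · exact congrFun ((placementOf_congr hD h).trans (placementOf_blockMap hD p.1.2.eq_zero _)) x
    · exact congrFun ((orientationOf_congr hD h).trans (orientationOf_blockMap hD p.2.2 _)) x

end Count

end PathPAut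

open PathPAut

theorem stmt14 (n : ℕ) (D : Set ℕ) (hne : D.Nonempty) (hD : D ⊆ Set.Icc 1 n) :
    {f : ℕ →. ℕ | IsPAut n f ∧ f.Dom = D}.ncard =
      2 ^ {I : Set ℕ | IsMaxIntervalOf I D ∧ 2 ≤ I.ncard}.ncard *
        Nat.factorial {I : Set ℕ | IsMaxIntervalOf I D}.ncard *
        Nat.choose (n - D.ncard + 1) {I : Set ℕ | IsMaxIntervalOf I D}.ncard := by
  have hs : ∑ a ∈ runStarts D n, runLength D a ≤ n := by
    rw [sum_runLength hD]
    simpa using Set.ncard_le_ncard hD (Set.finite_Icc 1 n)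
  rw [ncard_setOf_isMaxIntervalOf hD hne, ncard_setOf_isMaxIntervalOf_two_le hD hne,
    ← Nat.card_coe_set_eq, Nat.card_congr (pAutEquiv hD), Nat.card_prod, card_isPlacement hs,
    card_bool_support_subset, sum_runLength hD]
  ring
end

section
/- For n ≥ 3, in the monoid PAut(P_n), the partial automorphism α_i* (which reverses {1,…,i−1} and fixes {i+1,…,n}, with i omitted from the domain) satisfies α_i* = α_i τ α_{n−i+1} τ α_i, where τ is the full reversal j ↦ n−j+1 and α_j is the partial map that sends x to x for x < j and x to n+j+1−x for x > j, with j omitted from the domain. -/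
open scoped Classical

/-- The full reversal `τ : x ↦ n - x + 1` on `{1,…,n}`. -/
noncomputable def tauP (n : ℕ) : ℕ →. ℕ := fun x =>
  if x ∈ Set.Icc 1 n then Part.some (n + 1 - x) else Part.none

/-- `α_i`: domain `{1,…,n} \ {i}`, fixes `x < i`, sends `x > i` to `n + i + 1 - x`. -/
noncomputable def alphaMap (n i : ℕ) : ℕ →. ℕ := fun x =>
  if x ∈ Set.Icc 1 n ∧ x ≠ i then
    Part.some (if x < i then x else n + i + 1 - x) else Part.none

/-- `α_i*`: domain `{1,…,n} \ {i}`, sends `x < i` to `i - x`, fixes `x > i`. -/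
noncomputable def alphaStar (n i : ℕ) : ℕ →. ℕ := fun x =>
  if x ∈ Set.Icc 1 n ∧ x ≠ i then
    Part.some (if x < i then i - x else x) else Part.none

theorem stmt16 (n i : ℕ) (hn : 3 ≤ n) (hi1 : 1 ≤ i) (hin : i ≤ n) :
    alphaStar n i =
      pcomp (pcomp (pcomp (pcomp (alphaMap n i) (tauP n)) (alphaMap n (n - i + 1)))
        (tauP n)) (alphaMap n i) := by
  funext x
  simp only [pcomp, PFun.comp_apply, alphaStar, alphaMap, tauP, Set.mem_Icc]
  by_cases h : (1 ≤ x ∧ x ≤ n) ∧ x ≠ i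
  · rw [if_pos h]
    rcases lt_or_gt_of_ne h.2 with hx | hx
    · erw [if_pos hx, if_pos h, if_pos hx, Part.bind_some]
      simp only [tauP, alphaMap, Set.mem_Icc]
      erw [if_pos (by omega : 1 ≤ x ∧ x ≤ n), Part.bind_some]
      simp only [tauP, alphaMap, Set.mem_Icc]
      erw [if_pos (by omega : (1 ≤ n + 1 - x ∧ n + 1 - x ≤ n) ∧ n + 1 - x ≠ n - i + 1),
        if_neg (by omega : ¬ n + 1 - x < n - i + 1), Part.bind_some]
      simp only [tauP, alphaMap, Set.mem_Icc]
      erw [if_pos (by omega : 1 ≤ n + (n - i + 1) + 1 - (n + 1 - x) ∧ n + (n - i + 1) + 1 - (n + 1 - x) ≤ n),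
        Part.bind_some]
      simp only [tauP, alphaMap, Set.mem_Icc]
      have e1 : n + 1 - (n + (n - i + 1) + 1 - (n + 1 - x)) = i - x := by omega
      rw [e1, if_pos (by omega : (1 ≤ i - x ∧ i - x ≤ n) ∧ i - x ≠ i),
        if_pos (by omega : i - x < i)]
    · erw [if_neg (by omega : ¬ x < i), if_pos h, if_neg (by omega : ¬ x < i), Part.bind_some]
      simp only [tauP, alphaMap, Set.mem_Icc]
      erw [if_pos (by omega : 1 ≤ n + i + 1 - x ∧ n + i + 1 - x ≤ n), Part.bind_some]
      simp only [tauP, alphaMap, Set.mem_Icc]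
      have e1 : n + 1 - (n + i + 1 - x) = x - i := by omega
      erw [e1, if_pos (by omega : (1 ≤ x - i ∧ x - i ≤ n) ∧ x - i ≠ n - i + 1),
        if_pos (by omega : x - i < n - i + 1), Part.bind_some]
      simp only [tauP, alphaMap, Set.mem_Icc]
      erw [if_pos (by omega : 1 ≤ x - i ∧ x - i ≤ n), Part.bind_some]
      simp only [tauP, alphaMap, Set.mem_Icc]
      have e2 : n + 1 - (x - i) = n + i + 1 - x := by omega
      rw [e2, if_pos (by omega : (1 ≤ n + i + 1 - x ∧ n + i + 1 - x ≤ n) ∧ n + i + 1 - x ≠ i),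
        if_neg (by omega : ¬ n + i + 1 - x < i)]
      congr 1
      omega
  · erw [if_neg h, if_neg h, Part.bind_none, Part.bind_none, Part.bind_none, Part.bind_none]
end

section
/- For n ≥ 3, every partial automorphism of the path P_n is a product of elements of the set A = {τ} ∪ {α_i : 1 ≤ i ≤ n−2} (for n ≥ 4; for n = 3 take A = {τ, α₁, α₂}), i.e., A generates the monoid PAut(P_n). -/
open scoped Classical

/-- Membership in the submonoid generated by `G` (inside partial maps on `{1,…,n}`,
whose identity element is the identity map on `{1,…,n}`). -/
inductive InClosure (n : ℕ) (G : Set (ℕ →. ℕ)) : (ℕ →. ℕ) → Prop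
  | id : InClosure n G (PFun.res id (Set.Icc 1 n))
  | mem {f : ℕ →. ℕ} : f ∈ G → InClosure n G f
  | comp {f g : ℕ →. ℕ} : InClosure n G f → InClosure n G g → InClosure n G (pcomp f g)

/-- The monoid `PAut(P_n)` has rank `r`. -/
def PAutRank (n r : ℕ) : Prop :=
  (∃ G : Set (ℕ →. ℕ), G ⊆ {f | IsPAut n f} ∧ (∀ f, IsPAut n f ↔ InClosure n G f) ∧
      G.Finite ∧ G.ncard = r) ∧
  ∀ G : Set (ℕ →. ℕ), G ⊆ {f | IsPAut n f} → (∀ f, IsPAut n f ↔ InClosure n G f) →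
    r ≤ G.ncard

/-- The monoid `IEnd(P_n)` has rank `r`. -/
def IEndRank (n r : ℕ) : Prop :=
  (∃ G : Set (ℕ →. ℕ), G ⊆ {f | IsIEnd n f} ∧ (∀ f, IsIEnd n f ↔ InClosure n G f) ∧
      G.Finite ∧ G.ncard = r) ∧
  ∀ G : Set (ℕ →. ℕ), G ⊆ {f | IsIEnd n f} → (∀ f, IsIEnd n f ↔ InClosure n G f) →
    r ≤ G.ncard

/-- The generating set `A`: `{τ, α₁, α₂}` for `n = 3`, and `{τ} ∪ {αᵢ : 1 ≤ i ≤ n-2}`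
for `n ≥ 4`. -/
def Agen (n : ℕ) : Set (ℕ →. ℕ) :=
  {tauP n} ∪ {f | ∃ i, 1 ≤ i ∧ i ≤ (if n = 3 then 2 else n - 2) ∧ f = alphaMap n i}

/-
Every partial identity is a product of the idempotents `α_i α_i` and `τ α_i α_i τ`; every prefix
reversal `α*_j` (`x ↦ j - x` below `j`, the identity above `j`) is `τ`, a partial identity or
`τ α_{n+1-j} τ`; and three prefix reversals `α*_m α*_{m-v} α*_m` reverse the window `(v, m)`
while fixing everything outside `[v, m]`.

A partial automorphism of `P_n` is of the form `x ↦ x + d` or `x ↦ d - x` on each maximal run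
of its domain, and the images of different runs are not adjacent. Consider a partial
automorphism of the window `{1, …, m-1}`, extended by the identity above `m`. One or two window
reversals on the image side carry the image of the last run `[a, b]` of its domain onto the top
of the window in reverse order; the window reversal `(a-1, m)` on the domain side sends the run
itself there. What is left is a partial automorphism of a strictly smaller window, extended by
the identity, so induction on `m` concludes.
-/

open Set

theorem res_eq_res {F G : ℕ → ℕ} {s t : Set ℕ}
    (h : ∀ x, (x ∈ s ↔ x ∈ t) ∧ (x ∈ s → F x = G x)) : PFun.res F s = PFun.res G t :=
  PFun.ext fun x b => by
    simp only [PFun.mem_res]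
    exact ⟨fun ⟨hx, e⟩ => ⟨(h x).1.1 hx, ((h x).2 hx).symm.trans e⟩,
      fun ⟨hx, e⟩ => ⟨(h x).1.2 hx, ((h x).2 ((h x).1.2 hx)).trans e⟩⟩

theorem mem_pcomp {f g : ℕ →. ℕ} {x b : ℕ} : b ∈ pcomp f g x ↔ ∃ a ∈ f x, b ∈ g a := by
  rw [pcomp, PFun.comp_apply]
  exact Part.mem_bind_iff

theorem pcomp_res (F G : ℕ → ℕ) (s t : Set ℕ) :
    pcomp (PFun.res F s) (PFun.res G t) = PFun.res (G ∘ F) (s ∩ F ⁻¹' t) :=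
  PFun.ext fun x b => by simp [mem_pcomp, PFun.mem_res, and_assoc]

theorem ite_eq_res (F : ℕ → ℕ) (s : Set ℕ) {_ : DecidablePred (· ∈ s)} :
    (fun x => if x ∈ s then Part.some (F x) else Part.none) = PFun.res F s :=
  PFun.ext fun x b => by split_ifs with h <;> simp [PFun.mem_res, h, eq_comm]

theorem eq_res_getOrElse (f : ℕ →. ℕ) : f = PFun.res (fun x => (f x).getOrElse 0) f.Dom :=
  PFun.ext fun x b => by
    rw [PFun.mem_res]
    constructor
    · intro h
      have hd : (f x).Dom := Part.dom_iff_mem.2 ⟨b, h⟩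
      exact ⟨hd, by rw [Part.getOrElse_of_dom _ hd, Part.get_eq_of_mem h]⟩
    · rintro ⟨hd, rfl⟩
      rw [Part.getOrElse_of_dom _ hd]
      exact Part.get_mem hd

theorem tauP_eq_res (n : ℕ) : tauP n = PFun.res (fun x => n + 1 - x) (Icc 1 n) :=
  ite_eq_res _ _

theorem alphaMap_eq_res (n i : ℕ) :
    alphaMap n i = PFun.res (fun x => if x < i then x else n + i + 1 - x) (Icc 1 n \ {i}) :=
  ite_eq_res _ _

theorem alphaStar_eq_res (n j : ℕ) :
    alphaStar n j = PFun.res (fun x => if x < j then j - x else x) (Icc 1 n \ {j}) :=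
  ite_eq_res _ _

theorem isPAut_res_iff {n : ℕ} {F : ℕ → ℕ} {s : Set ℕ} :
    IsPAut n (PFun.res F s) ↔ s ⊆ Icc 1 n ∧ MapsTo F s (Icc 1 n) ∧ InjOn F s ∧
      ∀ x ∈ s, ∀ y ∈ s, adj (F x) (F y) ↔ adj x y := by
  simp only [IsPAut, PFun.mem_res]
  constructor
  · rintro ⟨⟨hdom, hran, hinj, hedge⟩, hedge'⟩
    exact ⟨fun x hx => hdom hx, fun x hx => hran ⟨x, (PFun.mem_res ..).2 ⟨hx, rfl⟩⟩,
      fun x hx y hy h => hinj ⟨hx, rfl⟩ ⟨hy, h.symm⟩,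
      fun x hx y hy => ⟨hedge' ⟨hx, rfl⟩ ⟨hy, rfl⟩, hedge ⟨hx, rfl⟩ ⟨hy, rfl⟩⟩⟩
  · rintro ⟨hdom, hmaps, hinj, hadj⟩
    refine ⟨⟨fun x hx => hdom hx, ?_, ?_, ?_⟩, ?_⟩
    · rintro _ ⟨x, hx, rfl⟩
      exact hmaps hx
    · rintro x y a ⟨hx, rfl⟩ ⟨hy, hxy⟩
      exact hinj hx hy hxy.symm
    · rintro u v _ _ ⟨hu, rfl⟩ ⟨hv, rfl⟩
      exact (hadj u hu v hv).2
    · rintro u v _ _ ⟨hu, rfl⟩ ⟨hv, rfl⟩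
      exact (hadj u hu v hv).1

theorem IsPAut.pcomp {n : ℕ} {f g : ℕ →. ℕ} (hf : IsPAut n f) (hg : IsPAut n g) :
    IsPAut n (pcomp f g) := by
  refine ⟨⟨?_, ?_, ?_, ?_⟩, ?_⟩
  · intro x hx
    obtain ⟨a, ha, -⟩ := mem_pcomp.1 (Part.get_mem hx)
    exact hf.1.dom_subset (Part.dom_iff_mem.2 ⟨a, ha⟩)
  · rintro b ⟨x, hx⟩
    obtain ⟨a, -, hb⟩ := mem_pcomp.1 hx
    exact hg.1.ran_subset ⟨a, hb⟩
  · intro x y b hx hy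
    obtain ⟨a, hxa, hab⟩ := mem_pcomp.1 hx
    obtain ⟨a', hya', hab'⟩ := mem_pcomp.1 hy
    obtain rfl := hg.1.inj hab hab'
    exact hf.1.inj hxa hya'
  · intro u v b b' hu hv huv
    obtain ⟨a, hua, hab⟩ := mem_pcomp.1 hu
    obtain ⟨a', hva', hab'⟩ := mem_pcomp.1 hv
    exact hg.1.edge hab hab' (hf.1.edge hua hva' huv)
  · intro u v b b' hu hv hbb'
    obtain ⟨a, hua, hab⟩ := mem_pcomp.1 hu
    obtain ⟨a', hva', hab'⟩ := mem_pcomp.1 hv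
    exact hf.2 hua hva' (hg.2 hab hab' hbb')

theorem IsPAut.res_mono {n : ℕ} {F : ℕ → ℕ} {s t : Set ℕ} (hF : IsPAut n (PFun.res F s))
    (hts : t ⊆ s) : IsPAut n (PFun.res F t) := by
  obtain ⟨hs, hmaps, hinj, hadj⟩ := isPAut_res_iff.1 hF
  exact isPAut_res_iff.2 ⟨hts.trans hs, hmaps.mono_left hts, hinj.mono hts,
    fun x hx y hy => hadj x (hts hx) y (hts hy)⟩

theorem isPAut_res_of_forall {n : ℕ} {F : ℕ → ℕ} {s : Set ℕ}
    (h : ∀ x ∈ s, ∀ y ∈ s, x ∈ Icc 1 n ∧ F x ∈ Icc 1 n ∧ (F x = F y → x = y) ∧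
      (adj (F x) (F y) ↔ adj x y)) :
    IsPAut n (PFun.res F s) :=
  isPAut_res_iff.2 ⟨fun x hx => (h x hx x hx).1, fun x hx => (h x hx x hx).2.1,
    fun x hx y hy => (h x hx y hy).2.2.1, fun x hx y hy => (h x hx y hy).2.2.2⟩

theorem isPAut_tauP (n : ℕ) : IsPAut n (tauP n) := by
  rw [tauP_eq_res]
  refine isPAut_res_of_forall fun x hx y hy => ?_
  simp only [mem_Icc, adj] at *
  omega

theorem isPAut_alphaMap (n i : ℕ) : IsPAut n (alphaMap n i) := by
  rw [alphaMap_eq_res]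
  refine isPAut_res_of_forall fun x hx y hy => ?_
  simp only [mem_sdiff, mem_Icc, mem_singleton_iff, adj] at *
  split_ifs <;> omega

theorem isPAut_of_inClosure {n : ℕ} {f : ℕ →. ℕ} (h : InClosure n (Agen n) f) :
    IsPAut n f := by
  induction h with
  | id => exact isPAut_res_of_forall fun _ hx _ _ => ⟨hx, hx, id, Iff.rfl⟩
  | mem hf =>
    obtain rfl | ⟨i, -, -, rfl⟩ := hf
    · exact isPAut_tauP n
    · exact isPAut_alphaMap n i
  | comp _ _ hf hg => exact hf.pcomp hg

theorem inClosure_tauP (n : ℕ) : InClosure n (Agen n) (tauP n) :=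
  .mem (.inl rfl)

theorem inClosure_alphaMap {n i : ℕ} (hn : 3 ≤ n) (hi1 : 1 ≤ i) (hi : i ≤ 2 ∨ i ≤ n - 2) :
    InClosure n (Agen n) (alphaMap n i) :=
  .mem (.inr ⟨i, hi1, by split_ifs <;> omega, rfl⟩)

theorem inClosure_alphaStar_of_three_le {n j : ℕ} (hn : 3 ≤ n) (hj3 : 3 ≤ j) (hj : j ≤ n + 1) :
    InClosure n (Agen n) (alphaStar n j) := by
  rcases hj.lt_or_eq with hj | rfl
  · have h : alphaStar n j = pcomp (pcomp (tauP n) (alphaMap n (n + 1 - j))) (tauP n) := by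
      rw [alphaStar_eq_res, alphaMap_eq_res, tauP_eq_res, pcomp_res, pcomp_res]
      refine res_eq_res fun x => ?_
      simp only [mem_sdiff, mem_Icc, mem_singleton_iff, mem_inter_iff, mem_preimage,
        Function.comp_apply]
      split_ifs <;> omega
    rw [h]
    exact .comp (.comp (inClosure_tauP n) (inClosure_alphaMap hn (by omega) (by omega)))
      (inClosure_tauP n)
  · have h : alphaStar n (n + 1) = tauP n := by
      rw [alphaStar_eq_res, tauP_eq_res]
      refine res_eq_res fun x => ?_
      simp only [mem_sdiff, mem_Icc, mem_singleton_iff]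
      split_ifs <;> omega
    rw [h]
    exact inClosure_tauP n

theorem inClosure_res_id_sdiff_singleton {n i : ℕ} (hn : 3 ≤ n) (hi : i ∈ Icc 1 n) :
    InClosure n (Agen n) (PFun.res id (Icc 1 n \ {i})) := by
  obtain ⟨hi1, hin⟩ := hi
  rcases le_or_gt i 2 with hi2 | hi2
  · have h : PFun.res id (Icc 1 n \ {i}) = pcomp (alphaMap n i) (alphaMap n i) := by
      rw [alphaMap_eq_res, pcomp_res]
      refine res_eq_res fun x => ?_
      simp only [mem_sdiff, mem_Icc, mem_singleton_iff, mem_inter_iff, mem_preimage,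
        Function.comp_apply, id]
      split_ifs <;> omega
    rw [h]
    have := inClosure_alphaMap hn hi1 (.inl hi2)
    exact .comp this this
  · have h : PFun.res id (Icc 1 n \ {i}) = pcomp (alphaStar n i) (alphaStar n i) := by
      rw [alphaStar_eq_res, pcomp_res]
      refine res_eq_res fun x => ?_
      simp only [mem_sdiff, mem_Icc, mem_singleton_iff, mem_inter_iff, mem_preimage,
        Function.comp_apply, id]
      split_ifs <;> omega
    rw [h]
    have := inClosure_alphaStar_of_three_le hn hi2 (by omega)
    exact .comp this this

theorem inClosure_res_id {n : ℕ} (hn : 3 ≤ n) {s : Set ℕ} (hs : s ⊆ Icc 1 n) :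
    InClosure n (Agen n) (PFun.res id s) := by
  have key (T : Finset ℕ) : InClosure n (Agen n) (PFun.res id (Icc 1 n \ T)) := by
    induction T using Finset.induction_on with
    | empty => simpa using InClosure.id
    | insert a T _ ih =>
      by_cases ha : a ∈ Icc 1 n
      · have h : PFun.res id (Icc 1 n \ ↑(insert a T)) =
            pcomp (PFun.res id (Icc 1 n \ T)) (PFun.res id (Icc 1 n \ {a})) := by
          rw [pcomp_res]
          refine res_eq_res fun x => ⟨?_, fun _ => rfl⟩
          simp only [Finset.coe_insert, mem_sdiff, mem_insert_iff, mem_inter_iff, mem_preimage,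
            id, mem_singleton_iff, Finset.mem_coe]
          tauto
        rw [h]
        exact .comp ih (inClosure_res_id_sdiff_singleton hn ha)
      · convert ih using 2
        ext x
        simp only [Finset.coe_insert, mem_sdiff, mem_insert_iff, Finset.mem_coe]
        constructor
        · tauto
        · rintro ⟨hx, hxT⟩
          exact ⟨hx, by rintro (rfl | h) <;> tauto⟩
  convert key ((Finset.Icc 1 n).filter (· ∉ s)) using 2
  ext x
  simp only [Finset.coe_filter, Finset.mem_Icc, mem_sdiff, mem_ofPred_eq, not_and, not_not]
  exact ⟨fun hx => ⟨hs hx, fun _ => hx⟩, fun ⟨hx, h⟩ => h hx⟩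

theorem inClosure_alphaStar {n j : ℕ} (hn : 3 ≤ n) (hj : j ≤ n + 1) :
    InClosure n (Agen n) (alphaStar n j) := by
  rcases le_or_gt 3 j with hj3 | hj3
  · exact inClosure_alphaStar_of_three_le hn hj3 hj
  · have h : alphaStar n j = PFun.res id (Icc 1 n \ {j}) := by
      rw [alphaStar_eq_res]
      refine res_eq_res fun x => ⟨Iff.rfl, fun hx => ?_⟩
      simp only [mem_sdiff, mem_Icc, mem_singleton_iff] at hx
      simp only [id]
      split_ifs <;> omega
    rw [h]
    exact inClosure_res_id hn sdiff_subset

def reflectIoo (v m y : ℕ) : ℕ := if v < y ∧ y < m then v + m - y else y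

def flipIoo (n v m : ℕ) : ℕ →. ℕ := PFun.res (reflectIoo v m) (Icc 1 n \ {v, m})

theorem isPAut_flipIoo {n v m : ℕ} (hm : m ≤ n + 1) : IsPAut n (flipIoo n v m) := by
  refine isPAut_res_of_forall fun x hx y hy => ?_
  simp only [mem_sdiff, mem_Icc, mem_insert_iff, mem_singleton_iff, reflectIoo, adj] at *
  split_ifs <;> omega

theorem inClosure_flipIoo {n v m : ℕ} (hn : 3 ≤ n) (hvm : v < m) (hm : m ≤ n + 1) :
    InClosure n (Agen n) (flipIoo n v m) := by
  have h : flipIoo n v m =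
      pcomp (pcomp (alphaStar n m) (alphaStar n (m - v))) (alphaStar n m) := by
    rw [flipIoo, alphaStar_eq_res, alphaStar_eq_res, pcomp_res, pcomp_res]
    refine res_eq_res fun x => ?_
    simp only [mem_sdiff, mem_Icc, mem_insert_iff, mem_singleton_iff, mem_inter_iff,
      mem_preimage, Function.comp_apply, reflectIoo]
    split_ifs <;> omega
  rw [h]
  have := inClosure_alphaStar hn hm
  exact .comp (.comp this (inClosure_alphaStar hn (by omega))) this

theorem isPAut_res_reflectIoo_comp {n v m : ℕ} {F : ℕ → ℕ} {s : Set ℕ}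
    (hF : IsPAut n (PFun.res F s)) (hm : m ≤ n + 1) (hs : ∀ x ∈ s, F x ≠ v ∧ F x ≠ m) :
    IsPAut n (PFun.res (reflectIoo v m ∘ F) s) := by
  have hmaps := (isPAut_res_iff.1 hF).2.1
  have h : PFun.res (reflectIoo v m ∘ F) s = pcomp (PFun.res F s) (flipIoo n v m) := by
    rw [flipIoo, pcomp_res]
    refine res_eq_res fun x => ⟨?_, fun _ => rfl⟩
    simp only [mem_inter_iff, mem_preimage, mem_sdiff, mem_insert_iff, mem_singleton_iff]
    exact ⟨fun hx => ⟨hx, hmaps hx, by simp [hs x hx]⟩, fun hx => hx.1⟩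
  rw [h]
  exact hF.pcomp (isPAut_flipIoo hm)

theorem exists_affine_of_Icc_subset {n a b : ℕ} {F : ℕ → ℕ} {s : Set ℕ}
    (hF : IsPAut n (PFun.res F s)) (hab : a ≤ b) (hsub : Icc a b ⊆ s) :
    ∃ c, (∀ y ∈ Icc a b, F y = c + (y - a)) ∨ (∀ y ∈ Icc a b, F y = c + (b - y)) := by
  obtain ⟨-, -, hinj, hadj⟩ := isPAut_res_iff.1 hF
  induction b, hab using Nat.le_induction with
  | base => exact ⟨F a, .inl fun y hy => by obtain rfl : y = a := le_antisymm hy.2 hy.1; simp⟩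
  | succ b hab ih =>
    have hb : b ∈ s := hsub ⟨hab, by omega⟩
    have hb1 : b + 1 ∈ s := hsub ⟨by omega, le_rfl⟩
    have hstep : F b + 1 = F (b + 1) ∨ F (b + 1) + 1 = F b := (hadj b hb _ hb1).2 (.inl rfl)
    have hext {P : ℕ → Prop} (hP : ∀ y ∈ Icc a b, P y) (h : P (b + 1)) :
        ∀ y ∈ Icc a (b + 1), P y := fun y ⟨hy1, hy2⟩ => by
      rcases hy2.lt_or_eq with hy2 | rfl
      exacts [hP y ⟨hy1, by omega⟩, h]
    rcases hab.eq_or_lt with rfl | hab'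
    · have hpair {P : ℕ → Prop} (h0 : P a) (h1 : P (a + 1)) : ∀ y ∈ Icc a (a + 1), P y :=
        hext (fun y hy => by rwa [le_antisymm hy.2 hy.1]) h1
      rcases hstep with h | h
      · exact ⟨F a, .inl (hpair (by simp) (by omega))⟩
      · exact ⟨F (a + 1), .inr (hpair (by omega) (by simp))⟩
    -- a run cannot turn back: `F (b + 1) = F (b - 1)` would contradict injectivity
    have hback : F (b + 1) ≠ F (b - 1) :=
      fun e => by have := hinj hb1 (hsub ⟨by omega, by omega⟩) e; omega
    obtain ⟨c, hc | hc⟩ := ih fun y hy => hsub ⟨hy.1, by have := hy.2; omega⟩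
    · have := hc b ⟨hab, le_rfl⟩
      have := hc (b - 1) ⟨by omega, by omega⟩
      exact ⟨c, .inl (hext hc (by omega))⟩
    · have := hc b ⟨hab, le_rfl⟩
      have := hc (b - 1) ⟨by omega, by omega⟩
      exact ⟨c - 1, .inr (hext (fun y hy => by have := hc y hy; have := hy.2; omega)
        (by omega))⟩

theorem image_separated_of_run {n a b c : ℕ} {F : ℕ → ℕ} {s : Set ℕ}
    (hF : IsPAut n (PFun.res F s)) (hab : a ≤ b) (hsub : Icc a b ⊆ s)
    (hgap : ∀ x ∈ s, x + 1 < a ∨ a ≤ x ∧ x ≤ b ∨ b + 1 < x)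
    (hc : (∀ y ∈ Icc a b, F y = c + (y - a)) ∨ (∀ y ∈ Icc a b, F y = c + (b - y)))
    {x : ℕ} (hx : x ∈ s) (hxab : x ∉ Icc a b) : F x + 1 < c ∨ c + (b - a) + 1 < F x := by
  obtain ⟨-, -, hinj, hadj⟩ := isPAut_res_iff.1 hF
  have hsep (y : ℕ) (hy : y ∈ Icc a b) : F x ≠ F y ∧ ¬ adj (F x) (F y) := by
    have hx' := hgap x hx
    have hne : x ≠ y := fun h => hxab (h ▸ hy)
    refine ⟨fun h => hne (hinj hx (hsub hy) h), fun h => ?_⟩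
    have := (hadj x hx y (hsub hy)).1 h
    simp only [adj, mem_Icc] at this hy hxab
    omega
  -- otherwise some point of the run has image equal or adjacent to `F x`
  by_contra! h
  rcases hc with hc | hc
  · have hy : a + min (F x - c) (b - a) ∈ Icc a b := ⟨by omega, by omega⟩
    have := hc _ hy
    have := hsep _ hy
    simp only [adj] at this
    omega
  · have hy : b - min (F x - c) (b - a) ∈ Icc a b := ⟨by omega, by omega⟩
    have := hc _ hy
    have := hsep _ hy
    simp only [adj] at this
    omega

theorem exists_last_run {s : Set ℕ} (hne : s.Nonempty) (hbdd : BddAbove s) :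
    ∃ a b, a ≤ b ∧ Icc a b ⊆ s ∧ ∀ x ∈ s, x + 1 < a ∨ a ≤ x ∧ x ≤ b := by
  have hb : sSup s ∈ s := Nat.sSup_mem hne hbdd
  have hex : ∃ a, Icc a (sSup s) ⊆ s := ⟨sSup s, by simpa using hb⟩
  refine ⟨Nat.find hex, sSup s, Nat.find_min' hex (by simpa using hb), Nat.find_spec hex,
    fun x hx => ?_⟩
  have hxb : x ≤ sSup s := le_csSup hbdd hx
  by_contra! h
  refine Nat.find_min hex (m := x) (by omega) fun y hy => ?_
  rcases eq_or_lt_of_le hy.1 with rfl | hy'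
  · exact hx
  · exact Nat.find_spec hex ⟨by omega, hy.2⟩

theorem exists_last_run_of_isPAut {n : ℕ} {F : ℕ → ℕ} {s : Set ℕ}
    (hF : IsPAut n (PFun.res F s)) (hne : s.Nonempty) :
    ∃ a b c, a ≤ b ∧ Icc a b ⊆ s ∧
      ((∀ y ∈ Icc a b, F y = c + (y - a)) ∨ (∀ y ∈ Icc a b, F y = c + (b - y))) ∧
      ∀ x ∈ s, a ≤ x ∧ x ≤ b ∨ x + 1 < a ∧ (F x + 1 < c ∨ c + (b - a) + 1 < F x) := by
  have hbdd : BddAbove s := ⟨n, fun x hx => ((isPAut_res_iff.1 hF).1 hx).2⟩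
  obtain ⟨a, b, hab, hsub, hlast⟩ := exists_last_run hne hbdd
  obtain ⟨c, hc⟩ := exists_affine_of_Icc_subset hF hab hsub
  refine ⟨a, b, c, hab, hsub, hc, fun x hx => (hlast x hx).symm.imp_right fun h => ⟨h, ?_⟩⟩
  refine image_separated_of_run hF hab hsub (fun y hy => (hlast y hy).imp_right .inl) hc hx ?_
  simp only [mem_Icc]
  omega

/-- `F` on `s ⊆ [1, m)` together with the identity on `(m, n]`; the gap at `m` keeps the two
parts non-adjacent. -/
def extendId (n m : ℕ) (F : ℕ → ℕ) (s : Set ℕ) : ℕ →. ℕ :=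
  PFun.res (fun x => if x < m then F x else x) (s ∪ Ioc m n)

theorem extendId_succ_self {n : ℕ} {F : ℕ → ℕ} {s : Set ℕ} (hs : s ⊆ Icc 1 n) :
    extendId n (n + 1) F s = PFun.res F s := by
  refine res_eq_res fun x => ⟨?_, fun hx => if_pos ?_⟩
  · simp only [mem_union, mem_Ioc]
    exact ⟨fun h => h.resolve_right (by omega), .inl⟩
  · rcases hx with hx | hx
    · exact Nat.lt_succ_of_le (hs hx).2
    · exact absurd hx.2 (by have := hx.1; omega)

theorem extendId_empty (n m : ℕ) (F : ℕ → ℕ) : extendId n m F ∅ = PFun.res id (Ioc m n) := by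
  refine res_eq_res fun x => ⟨by simp, fun hx => if_neg ?_⟩
  simp only [empty_union, mem_Ioc] at hx
  omega

theorem extendId_eq_pcomp_flipIoo {n v m : ℕ} {F : ℕ → ℕ} {s : Set ℕ} (hvm : v < m)
    (hm : m ≤ n + 1) (hs : ∀ x ∈ s, x < m ∧ 1 ≤ F x ∧ F x < m ∧ F x ≠ v) :
    extendId n m F s = pcomp (extendId n m (reflectIoo v m ∘ F) s) (flipIoo n v m) := by
  rw [extendId, extendId, flipIoo, pcomp_res]
  refine res_eq_res fun x => ?_
  by_cases hx : x ∈ s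
  · have := hs x hx
    simp only [mem_union, mem_inter_iff, mem_preimage, mem_sdiff, mem_Icc, mem_Ioc,
      mem_insert_iff, mem_singleton_iff, Function.comp_apply, reflectIoo, hx, true_or,
      true_and, true_iff, forall_const]
    split_ifs <;> omega
  · simp only [mem_union, mem_inter_iff, mem_preimage, mem_sdiff, mem_Icc, mem_Ioc,
      mem_insert_iff, mem_singleton_iff, Function.comp_apply, reflectIoo, hx, false_or]
    split_ifs <;> omega

theorem extendId_eq_flipIoo_pcomp {n v k m : ℕ} {F : ℕ → ℕ} {s : Set ℕ} (hvk : v ≤ k)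
    (hkm : k < m) (hm : m ≤ n + 1)
    (hs : ∀ x ∈ s, 1 ≤ x ∧ (x < v ∧ F x < k ∨ v < x ∧ k < F x ∧ F x + x = v + m))
    (hrun : ∀ x, v < x → x + k < v + m → x ∈ s) :
    extendId n m F s = pcomp (flipIoo n v m) (extendId n k F (s ∩ Iio v)) := by
  rw [extendId, extendId, flipIoo, pcomp_res]
  refine res_eq_res fun x => ⟨?_, fun hx => ?_⟩
  · simp only [mem_union, mem_inter_iff, mem_preimage, mem_sdiff, mem_Icc, mem_Ioc, mem_Iio,
      mem_insert_iff, mem_singleton_iff, reflectIoo]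
    constructor
    · rintro (hx | hx)
      · obtain ⟨h1, h | h⟩ := hs x hx
        · refine ⟨⟨⟨h1, by omega⟩, by omega⟩, .inl ?_⟩
          rw [if_neg (by omega)]
          exact ⟨hx, h.1⟩
        · refine ⟨⟨⟨h1, by omega⟩, by omega⟩, .inr ?_⟩
          rw [if_pos (by omega)]
          omega
      · refine ⟨⟨⟨by omega, hx.2⟩, by omega⟩, .inr ?_⟩
        rw [if_neg (by omega)]
        omega
    · rintro ⟨⟨hxn, hxvm⟩, hy⟩
      split_ifs at hy with h
      · rcases hy with hy | hy
        · omega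
        · exact .inl (hrun x h.1 (by omega))
      · rcases hy with hy | hy
        · exact .inl hy.1
        · right
          omega
  · have hx' : x ∈ Ioc m n ∨ 1 ≤ x ∧ (x < v ∧ F x < k ∨ v < x ∧ k < F x ∧ F x + x = v + m) :=
      hx.elim (fun hx => .inr (hs x hx)) .inl
    simp only [mem_Ioc] at hx'
    simp only [Function.comp_apply, reflectIoo]
    split_ifs <;> omega

theorem inClosure_extendId_of_reversed_top_run {n a b k m : ℕ} (hn : 3 ≤ n) {G : ℕ → ℕ}
    {s : Set ℕ} (hm : m ≤ n + 1) (hG : IsPAut n (PFun.res G s)) (ha : 1 ≤ a) (hab : a ≤ b)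
    (hbm : b < m) (hkm : k + (b - a) + 2 = m) (hsub : Icc a b ⊆ s)
    (hlow : ∀ x ∈ s, x ∈ Icc a b ∨ x + 1 < a ∧ G x < k)
    (htop : ∀ x ∈ Icc a b, G x + x = a - 1 + m)
    (ih : ∀ {G : ℕ → ℕ} {t : Set ℕ}, IsPAut n (PFun.res G t) → (∀ x ∈ t, x < k ∧ G x < k) →
      InClosure n (Agen n) (extendId n k G t)) :
    InClosure n (Agen n) (extendId n m G s) := by
  have hs (x : ℕ) (hx : x ∈ s) :
      1 ≤ x ∧ (x < a - 1 ∧ G x < k ∨ a - 1 < x ∧ k < G x ∧ G x + x = a - 1 + m) := by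
    have := ((isPAut_res_iff.1 hG).1 hx).1
    rcases hlow x hx with h | h
    · have := htop x h
      have := h.1
      have := h.2
      omega
    · omega
  rw [extendId_eq_flipIoo_pcomp (by omega) (by omega) hm hs fun x h1 h2 =>
    hsub ⟨by omega, by omega⟩]
  refine .comp (inClosure_flipIoo hn (by omega) hm)
    (ih (hG.res_mono inter_subset_left) fun x ⟨hx, hxa⟩ => ?_)
  rw [mem_Iio] at hxa
  have := hs x hx
  omega

theorem inClosure_extendId_of_top_run {n a b k m : ℕ} (hn : 3 ≤ n) {G : ℕ → ℕ}
    {s : Set ℕ} (hm : m ≤ n + 1) (hG : IsPAut n (PFun.res G s)) (ha : 1 ≤ a) (hab : a ≤ b)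
    (hbm : b < m) (hkm : k + (b - a) + 2 = m) (hsub : Icc a b ⊆ s)
    (hlow : ∀ x ∈ s, x ∈ Icc a b ∨ x + 1 < a ∧ G x < k)
    (htop : (∀ x ∈ Icc a b, G x + x = a - 1 + m) ∨ ∀ x ∈ Icc a b, G x = k + 1 + (x - a))
    (ih : ∀ {G : ℕ → ℕ} {t : Set ℕ}, IsPAut n (PFun.res G t) → (∀ x ∈ t, x < k ∧ G x < k) →
      InClosure n (Agen n) (extendId n k G t)) :
    InClosure n (Agen n) (extendId n m G s) := by
  rcases htop with htop | htop
  · exact inClosure_extendId_of_reversed_top_run hn hm hG ha hab hbm hkm hsub hlow htop ih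
  have hG' (x : ℕ) (hx : x ∈ s) : x < m ∧ 1 ≤ G x ∧ G x < m ∧ G x ≠ k := by
    have := ((isPAut_res_iff.1 hG).2.1 hx).1
    rcases hlow x hx with h | h
    · have := htop x h
      have := h.2
      omega
    · omega
  rw [extendId_eq_pcomp_flipIoo (by omega) hm hG']
  refine .comp (inClosure_extendId_of_reversed_top_run hn hm (isPAut_res_reflectIoo_comp hG hm
    fun x hx => ⟨(hG' x hx).2.2.2, (hG' x hx).2.2.1.ne⟩) ha hab hbm hkm hsub (fun x hx => ?_)
    (fun x hx => ?_) ih) (inClosure_flipIoo hn (by omega) hm)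
  · refine (hlow x hx).imp_right fun h => ⟨h.1, ?_⟩
    simp only [Function.comp_apply, reflectIoo]
    split_ifs <;> omega
  · have := htop x hx
    have := hx.1
    have := hx.2
    simp only [Function.comp_apply, reflectIoo]
    split_ifs <;> omega

theorem inClosure_extendId {n : ℕ} (hn : 3 ≤ n) (m : ℕ) (hm : m ≤ n + 1) {F : ℕ → ℕ} {s : Set ℕ}
    (hF : IsPAut n (PFun.res F s)) (hs : ∀ x ∈ s, x < m ∧ F x < m) :
    InClosure n (Agen n) (extendId n m F s) := by
  induction m using Nat.strong_induction_on generalizing F s with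
  | _ m ih =>
  obtain ⟨hsn, hmaps, -, -⟩ := isPAut_res_iff.1 hF
  rcases s.eq_empty_or_nonempty with rfl | hne
  · rw [extendId_empty]
    exact inClosure_res_id hn fun x hx => ⟨by have := hx.1; omega, hx.2⟩
  obtain ⟨a, b, c, hab, hsub, hc, hvals⟩ := exists_last_run_of_isPAut hF hne
  have ha : 1 ≤ a := (hsn (hsub ⟨le_rfl, hab⟩)).1
  have hb : b < m := (hs b (hsub ⟨hab, le_rfl⟩)).1
  have hcm : 1 ≤ c ∧ c + (b - a) < m := by
    have ha' := hsub ⟨le_rfl, hab⟩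
    have hb' := hsub ⟨hab, le_rfl⟩
    have := (hs a ha').2; have := (hs b hb').2; have := (hmaps ha').1; have := (hmaps hb').1
    rcases hc with hc | hc <;> have := hc a ⟨le_rfl, hab⟩ <;> have := hc b ⟨hab, le_rfl⟩ <;>
      omega
  obtain ⟨k, hk⟩ : ∃ k, k + (b - a) + 2 = m := ⟨m - (b - a) - 2, by omega⟩
  have hF' (x : ℕ) (hx : x ∈ s) : x < m ∧ 1 ≤ F x ∧ F x < m ∧ F x ≠ c - 1 := by
    refine ⟨(hs x hx).1, (hmaps hx).1, (hs x hx).2, ?_⟩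
    rcases hvals x hx with h | h
    · rcases hc with hc | hc <;> have := hc x h <;> omega
    · omega
  -- reflecting the window `(c - 1, m)` carries the image of the run `[a, b]` onto `(k, m)`
  rw [extendId_eq_pcomp_flipIoo (by omega) hm hF']
  refine .comp (inClosure_extendId_of_top_run hn hm (isPAut_res_reflectIoo_comp hF hm
    fun x hx => ⟨(hF' x hx).2.2.2, (hF' x hx).2.2.1.ne⟩) ha hab hb hk hsub (fun x hx => ?_) ?_
    fun {G t} => ih k (by omega) (by omega) (F := G) (s := t)) (inClosure_flipIoo hn (by omega) hm)
  · refine (hvals x hx).imp (fun h => h) fun h => ⟨h.1, ?_⟩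
    have := hF' x hx
    simp only [Function.comp_apply, reflectIoo]
    split_ifs <;> omega
  · refine hc.imp (fun hc x hx => ?_) fun hc x hx => ?_ <;>
    · have := hc x hx
      have := hF' x (hsub hx)
      have := hx.1
      have := hx.2
      simp only [Function.comp_apply, reflectIoo]
      split_ifs <;> omega

theorem stmt17 (n : ℕ) (hn : 3 ≤ n) :
    ∀ f : ℕ →. ℕ, IsPAut n f ↔ InClosure n (Agen n) f := by
  intro f
  refine ⟨fun hf => ?_, isPAut_of_inClosure⟩
  rw [eq_res_getOrElse f] at hf ⊢
  obtain ⟨hs, hmaps, -, -⟩ := isPAut_res_iff.1 hf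
  rw [← extendId_succ_self hs]
  exact inClosure_extendId hn (n + 1) le_rfl hf fun x hx =>
    ⟨Nat.lt_succ_of_le (hs hx).2, Nat.lt_succ_of_le (hmaps hx).2⟩
end
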